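/- arXiv:1402.4871 — 3 statements merged into one kernel-verified Lean document; each statement's English description precedes it below -/
import Mathlib

section
/- For a finite simple graph G admitting a weak IASI, the minimum number of mono-indexed vertices, taken over all weak IASIs of G, equals the vertex covering number β(G) of G. -/
open Pointwise

/-- The induced set-label on unordered pairs: the sumset of the two vertex labels. -/
def edgeLabel {V : Type*} (f : V → Finset ℕ) : Sym2 V → Finset ℕ :=
  Sym2.lift ⟨fun u v => f u + f v, fun u v => add_comm (f u) (f v)⟩

/-- `f` is a weak integer additive set-indexer of `G`. -/
structure IsWeakIASI {V : Type*} (G : SimpleGraph V) (f : V → Finset ℕ) : Prop where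
  nonempty : ∀ v, (f v).Nonempty
  injective : Function.Injective f
  edgeInjective : Set.InjOn (edgeLabel f) G.edgeSet
  weak : ∀ u v, G.Adj u v → (edgeLabel f s(u, v)).card = max (f u).card (f v).card

/-- The number of mono-indexed edges of `G` under the labeling `f`. -/
noncomputable def monoEdgeCount {V : Type*} (G : SimpleGraph V) (f : V → Finset ℕ) : ℕ :=
  {e ∈ G.edgeSet | (edgeLabel f e).card = 1}.ncard

/-- The sparing number: the minimum number of mono-indexed edges over all weak IASIs. -/
noncomputable def sparingNumber {V : Type*} (G : SimpleGraph V) : ℕ :=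
  sInf {n | ∃ f, IsWeakIASI G f ∧ monoEdgeCount G f = n}

/-- The number of mono-indexed vertices under the labeling `f`. -/
noncomputable def monoVertexCount {V : Type*} (f : V → Finset ℕ) : ℕ :=
  {v | (f v).card = 1}.ncard

/-- `S` is a vertex cover of `G`: every edge has at least one end vertex in `S`. -/
def IsVertexCover {V : Type*} (G : SimpleGraph V) (S : Set V) : Prop :=
  ∀ ⦃u v⦄, G.Adj u v → u ∈ S ∨ v ∈ S

/-- The vertex covering number of `G`. -/
noncomputable def coverNumber {V : Type*} (G : SimpleGraph V) : ℕ :=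
  sInf {n | ∃ S : Set V, IsVertexCover G S ∧ S.ncard = n}

/-- The independence number of `G`. -/
noncomputable def indepNumber {V : Type*} (G : SimpleGraph V) : ℕ :=
  sSup {n | ∃ S : Set V, (∀ u ∈ S, ∀ v ∈ S, ¬ G.Adj u v) ∧ S.ncard = n}

/- Every edge of a weak IASI has a mono-indexed end: by Cauchy–Davenport, two labels of size at
least 2 have a sumset strictly larger than either. Conversely, for any vertex cover `S`, label
the `i`-th vertex by `{2 ^ i}` if it lies in `S` and by `{2 ^ i, 2 ^ i + 1}` otherwise; the
least element of an edge's label is then `2 ^ i + 2 ^ j`, whose binary expansion recovers the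
edge. Such an indexing exists because an injective labeling embeds the vertices into the
countable type `Finset ℕ`. -/

theorem IsLeast.add {α : Type*} [Add α] [Preorder α] [AddLeftMono α] [AddRightMono α]
    {s t : Set α} {a b : α} (ha : IsLeast s a) (hb : IsLeast t b) :
    IsLeast (s + t) (a + b) := by
  refine ⟨Set.add_mem_add ha.1 hb.1, ?_⟩
  rintro _ ⟨x, hx, y, hy, rfl⟩
  exact add_le_add (ha.2 hx) (hb.2 hy)

theorem Finset.card_eq_one_or_card_eq_one_of_card_add_eq_max {α : Type*} [LinearOrder α]
    [AddCancelCommMonoid α] [AddLeftMono α] {s t : Finset α}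
    (hs : s.Nonempty) (ht : t.Nonempty) (h : (s + t).card = max s.card t.card) :
    s.card = 1 ∨ t.card = 1 := by
  have := cauchy_davenport_add_of_linearOrder_isCancelAdd hs ht
  have := hs.card_pos
  have := ht.card_pos
  omega

theorem Finset.card_add_eq_max_of_card_eq_one {α : Type*} [DecidableEq α] [AddCancelMonoid α]
    {s t : Finset α} (hs : s.card = 1) (ht : t.Nonempty) :
    (s + t).card = max s.card t.card := by
  obtain ⟨a, rfl⟩ := Finset.card_eq_one.1 hs
  rw [Finset.card_singleton_add, hs, max_eq_right ht.card_pos]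

theorem Sym2.eq_of_pow_add_pow_eq {n a b c d : ℕ} (hn : 2 ≤ n) (hab : a ≠ b) (hcd : c ≠ d)
    (h : n ^ a + n ^ b = n ^ c + n ^ d) : s(a, b) = s(c, d) := by
  rw [← Finset.sum_pair hab, ← Finset.sum_pair hcd] at h
  have hpair : ({a, b} : Set ℕ) = {c, d} := by
    simpa using congrArg ((↑) : Finset ℕ → Set ℕ) (Finset.geomSum_injective hn h)
  exact Sym2.eq_iff.2 (Set.pair_eq_pair_iff.1 hpair)

section VertexCover

variable {V : Type*} {G : SimpleGraph V} {S : Set V}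

theorem coverNumber_le_ncard (hS : IsVertexCover G S) : coverNumber G ≤ S.ncard :=
  Nat.sInf_le ⟨S, hS, rfl⟩

theorem exists_isVertexCover_ncard_eq_coverNumber (G : SimpleGraph V) :
    ∃ S, IsVertexCover G S ∧ S.ncard = coverNumber G :=
  Nat.sInf_mem (s := {n | ∃ S : Set V, IsVertexCover G S ∧ S.ncard = n})
    ⟨_, Set.univ, fun u _ _ => Or.inl (Set.mem_univ u), rfl⟩

theorem IsWeakIASI.isVertexCover {f : V → Finset ℕ} (hf : IsWeakIASI G f) :
    IsVertexCover G {v | (f v).card = 1} := fun u v huv =>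
  Finset.card_eq_one_or_card_eq_one_of_card_add_eq_max (hf.nonempty u) (hf.nonempty v)
    (hf.weak u v huv)

theorem IsWeakIASI.coverNumber_le_monoVertexCount {f : V → Finset ℕ} (hf : IsWeakIASI G f) :
    coverNumber G ≤ monoVertexCount f :=
  coverNumber_le_ncard hf.isVertexCover

theorem edgeLabel_injOn_of_isLeast {f : V → Finset ℕ} {idx : V → ℕ}
    (hidx : Function.Injective idx) (hf : ∀ v, IsLeast (f v : Set ℕ) (2 ^ idx v)) :
    Set.InjOn (edgeLabel f) G.edgeSet := by
  have hleast : ∀ u v, IsLeast (edgeLabel f s(u, v) : Set ℕ) (2 ^ idx u + 2 ^ idx v) :=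
    fun u v => by simpa [edgeLabel] using (hf u).add (hf v)
  intro e₁ he₁ e₂ he₂ h
  induction e₁ using Sym2.ind with | h u v => ?_
  induction e₂ using Sym2.ind with | h x y => ?_
  have hne : ∀ {a b}, s(a, b) ∈ G.edgeSet → idx a ≠ idx b :=
    fun he => hidx.ne (G.ne_of_adj he)
  have hsum := (hleast u v).unique (h ▸ hleast x y)
  exact Sym2.map.injective hidx (Sym2.eq_of_pow_add_pow_eq le_rfl (hne he₁) (hne he₂) hsum)

open Classical in
noncomputable def coverLabel (S : Set V) (idx : V → ℕ) (v : V) : Finset ℕ :=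
  if v ∈ S then {2 ^ idx v} else {2 ^ idx v, 2 ^ idx v + 1}

theorem isLeast_coverLabel (S : Set V) (idx : V → ℕ) (v : V) :
    IsLeast (coverLabel S idx v : Set ℕ) (2 ^ idx v) := by
  unfold coverLabel
  split_ifs <;> simp [IsLeast, lowerBounds]

theorem coverLabel_nonempty (S : Set V) (idx : V → ℕ) (v : V) : (coverLabel S idx v).Nonempty :=
  ⟨_, (isLeast_coverLabel S idx v).1⟩

theorem card_coverLabel_eq_one_iff {idx : V → ℕ} {v : V} :
    (coverLabel S idx v).card = 1 ↔ v ∈ S := by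
  unfold coverLabel
  split_ifs with hv <;> simp [hv]

theorem monoVertexCount_coverLabel (S : Set V) (idx : V → ℕ) :
    monoVertexCount (coverLabel S idx) = S.ncard := by
  simp only [monoVertexCount, card_coverLabel_eq_one_iff, Set.ofPred_mem_eq]

theorem isWeakIASI_coverLabel {idx : V → ℕ} (hS : IsVertexCover G S)
    (hidx : Function.Injective idx) : IsWeakIASI G (coverLabel S idx) where
  nonempty := coverLabel_nonempty S idx
  injective u v h := hidx <| Nat.pow_right_injective le_rfl <|
    (isLeast_coverLabel S idx u).unique (by rw [h]; exact isLeast_coverLabel S idx v)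
  edgeInjective := edgeLabel_injOn_of_isLeast hidx (isLeast_coverLabel S idx)
  weak u v huv := by
    rcases hS huv with hu | hv
    · exact Finset.card_add_eq_max_of_card_eq_one (card_coverLabel_eq_one_iff.2 hu)
        (coverLabel_nonempty S idx v)
    · change (coverLabel S idx u + coverLabel S idx v).card = _
      rw [add_comm, max_comm]
      exact Finset.card_add_eq_max_of_card_eq_one (card_coverLabel_eq_one_iff.2 hv)
        (coverLabel_nonempty S idx u)

end VertexCover

theorem min_monoVertices_eq_coverNumber_general {V : Type*} (G : SimpleGraph V)
    (hG : ∃ f, IsWeakIASI G f) :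
    sInf {n | ∃ f, IsWeakIASI G f ∧ monoVertexCount f = n} = coverNumber G := by
  obtain ⟨f, hf⟩ := hG
  refine le_antisymm ?_ (le_csInf ⟨_, f, hf, rfl⟩ ?_)
  · obtain ⟨S, hS, hcard⟩ := exists_isVertexCover_ncard_eq_coverNumber G
    have : Countable V := hf.injective.countable
    obtain ⟨idx, hidx⟩ := Countable.exists_injective_nat V
    exact Nat.sInf_le ⟨coverLabel S idx, isWeakIASI_coverLabel hS hidx,
      (monoVertexCount_coverLabel S idx).trans hcard⟩
  · rintro _ ⟨g, hg, rfl⟩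
    exact hg.coverNumber_le_monoVertexCount

/-- The minimum number of mono-indexed vertices in a weak IASI graph `G`, taken over all
weak IASIs of `G`, equals the covering number `β(G)`. -/
theorem min_monoVertices_eq_coverNumber {V : Type*} [Fintype V] (G : SimpleGraph V)
    (hG : ∃ f, IsWeakIASI G f) :
    sInf {n | ∃ f, IsWeakIASI G f ∧ monoVertexCount f = n} = coverNumber G :=
  min_monoVertices_eq_coverNumber_general G hG
end

section
/- Let G be a finite simple graph on n vertices admitting a weak IASI. Then the minimum number of mono-indexed vertices of G, taken over all weak IASIs of G, equals n − α(G), where α(G) is the independence number of G. -/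
open Pointwise

/-! ### Auxiliary lemmas -/

lemma min'_add (A B : Finset ℕ) (hA : A.Nonempty) (hB : B.Nonempty) :
    (A + B).min' (hA.add hB) = A.min' hA + B.min' hB := by
  apply le_antisymm
  · exact Finset.min'_le _ _ (Finset.add_mem_add (A.min'_mem hA) (B.min'_mem hB))
  · apply Finset.le_min'
    intro x hx
    obtain ⟨a, ha, b, hb, rfl⟩ := Finset.mem_add.1 hx
    exact add_le_add (A.min'_le a ha) (B.min'_le b hb)

lemma card_add_le_card_sum (A B : Finset ℕ) (hA : A.Nonempty) (hB : B.Nonempty) :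
    A.card + B.card ≤ (A + B).card + 1 := by
  classical
  set m := B.min' hB with hm
  set M := A.max' hA with hM
  set C₁ := A.image (· + m) with hC₁
  set C₂ := B.image (M + ·) with hC₂
  have h1 : C₁ ⊆ A + B := by
    intro x hx
    obtain ⟨a, ha, rfl⟩ := Finset.mem_image.1 hx
    exact Finset.add_mem_add ha (B.min'_mem hB)
  have h2' : C₂ ⊆ A + B := by
    intro x hx
    obtain ⟨b, hb, rfl⟩ := Finset.mem_image.1 hx
    exact Finset.add_mem_add (A.max'_mem hA) hb
  have hc1 : C₁.card = A.card := Finset.card_image_of_injective _ (add_left_injective m)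
  have hc2 : C₂.card = B.card := Finset.card_image_of_injective _ (add_right_injective M)
  have hint : C₁ ∩ C₂ ⊆ {M + m} := by
    intro x hx
    obtain ⟨hx1, hx2⟩ := Finset.mem_inter.1 hx
    obtain ⟨a, ha, rfl⟩ := Finset.mem_image.1 hx1
    obtain ⟨b, hb, hab⟩ := Finset.mem_image.1 hx2
    have h3 : a ≤ M := A.le_max' a ha
    have h4 : m ≤ b := B.min'_le b hb
    have : a + m = M + m := by omega
    simp [this]
  have := Finset.card_union_add_card_inter C₁ C₂
  have h5 : (C₁ ∪ C₂).card ≤ (A + B).card :=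
    Finset.card_le_card (Finset.union_subset h1 h2')
  have h6 : (C₁ ∩ C₂).card ≤ 1 := by
    simpa using Finset.card_le_card hint
  omega

lemma pow4_lt {i j : ℕ} (h : i < j) : 4 ^ i + 4 ^ i + 4 ^ i + 4 ^ i ≤ 4 ^ j := by
  calc 4 ^ i + 4 ^ i + 4 ^ i + 4 ^ i = 4 ^ (i + 1) := by ring
  _ ≤ 4 ^ j := Nat.pow_le_pow_right (by norm_num) h

lemma pow4_ord {i j k l : ℕ} (hij : i < j) (hkl : k < l)
    (h : 4 ^ i + 4 ^ j = 4 ^ k + 4 ^ l) : i = k ∧ j = l := by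
  have hjl : j = l := by
    rcases lt_trichotomy j l with hlt | he | hlt
    · have h1 := pow4_lt hlt
      have h2 : (4:ℕ) ^ i ≤ 4 ^ j := Nat.pow_le_pow_right (by norm_num) hij.le
      have h3 : 0 < (4:ℕ) ^ k := pow_pos (by norm_num) k
      generalize (4:ℕ) ^ i = A at *
      generalize (4:ℕ) ^ j = B at *
      generalize (4:ℕ) ^ k = C at *
      generalize (4:ℕ) ^ l = D at *
      omega
    · exact he
    · have h1 := pow4_lt hlt
      have h2 : (4:ℕ) ^ k ≤ 4 ^ l := Nat.pow_le_pow_right (by norm_num) hkl.le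
      have h3 : 0 < (4:ℕ) ^ i := pow_pos (by norm_num) i
      generalize (4:ℕ) ^ i = A at *
      generalize (4:ℕ) ^ j = B at *
      generalize (4:ℕ) ^ k = C at *
      generalize (4:ℕ) ^ l = D at *
      omega
  subst hjl
  have h4 : (4 : ℕ) ^ i = 4 ^ k := by
    have h3 : 0 < (4:ℕ) ^ j := pow_pos (by norm_num) j
    generalize (4:ℕ) ^ i = A at *
    generalize (4:ℕ) ^ j = B at *
    generalize (4:ℕ) ^ k = C at *
    omega
  exact ⟨Nat.pow_right_injective (by norm_num) h4, rfl⟩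

lemma pow4_pair {i j k l : ℕ} (hij : i ≠ j) (hkl : k ≠ l)
    (h : 4 ^ i + 4 ^ j = 4 ^ k + 4 ^ l) : (i = k ∧ j = l) ∨ (i = l ∧ j = k) := by
  rcases hij.lt_or_gt with h1 | h1 <;> rcases hkl.lt_or_gt with h2 | h2
  · exact Or.inl (pow4_ord h1 h2 h)
  · exact Or.inr (pow4_ord h1 h2 (by omega))
  · have := pow4_ord h1 h2 (by omega : 4 ^ j + 4 ^ i = 4 ^ k + 4 ^ l)
    exact Or.inr ⟨this.2, this.1⟩
  · have := pow4_ord h1 h2 (by omega : 4 ^ j + 4 ^ i = 4 ^ l + 4 ^ k)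
    exact Or.inl ⟨this.2, this.1⟩

lemma pair_min' (a : ℕ) (ha : 0 < a) (h : ({a, 2 * a} : Finset ℕ).Nonempty) :
    ({a, 2 * a} : Finset ℕ).min' h = a := by
  apply le_antisymm (Finset.min'_le _ _ (by simp))
  apply Finset.le_min'
  intro y hy
  rcases Finset.mem_insert.1 hy with rfl | hy
  · exact le_refl _
  · simp only [Finset.mem_singleton] at hy
    omega

/-- For a weak IASI graph `G` on `n` vertices, the minimum number of mono-indexed vertices,
taken over all weak IASIs of `G`, equals `n - α(G)`. -/
theorem min_monoVertices_eq_card_sub_indepNumber {V : Type*} [Fintype V] (G : SimpleGraph V)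
    (hG : ∃ f, IsWeakIASI G f) :
    sInf {n | ∃ f, IsWeakIASI G f ∧ monoVertexCount f = n} =
      Fintype.card V - indepNumber G := by
  classical
  set n := Fintype.card V with hn
  set F : Set ℕ := {m | ∃ S : Set V, (∀ u ∈ S, ∀ v ∈ S, ¬ G.Adj u v) ∧ S.ncard = m} with hF
  have hFbdd : BddAbove F := by
    refine ⟨n, ?_⟩
    rintro m ⟨S, -, rfl⟩
    calc S.ncard ≤ (Set.univ : Set V).ncard :=
          Set.ncard_le_ncard (Set.subset_univ S) (Set.toFinite _)
      _ = n := by rw [Set.ncard_univ, Nat.card_eq_fintype_card]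
  have hF0 : (0 : ℕ) ∈ F := ⟨∅, by simp, by simp⟩
  have hαF : indepNumber G ∈ F := Nat.sSup_mem ⟨0, hF0⟩ hFbdd
  obtain ⟨S, hSindep, hScard⟩ := hαF
  have hα_le : ∀ m ∈ F, m ≤ indepNumber G := fun m hm => le_csSup hFbdd hm
  -- Lower bound: every weak IASI has at least n - α mono-indexed vertices.
  have hlow : ∀ (f : V → Finset ℕ), IsWeakIASI G f →
      n - indepNumber G ≤ monoVertexCount f := by
    intro f hf
    set I : Set V := {v | 2 ≤ (f v).card} with hI
    have hIindep : ∀ u ∈ I, ∀ v ∈ I, ¬ G.Adj u v := by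
      intro u hu v hv hadj
      have hw := hf.weak u v hadj
      have hel : edgeLabel f s(u, v) = f u + f v := rfl
      rw [hel] at hw
      have hcb := card_add_le_card_sum (f u) (f v) (hf.nonempty u) (hf.nonempty v)
      simp only [hI, Set.mem_setOf_eq] at hu hv
      omega
    have hIα : I.ncard ≤ indepNumber G := hα_le _ ⟨I, hIindep, rfl⟩
    have hcompl : {v | (f v).card = 1} = Iᶜ := by
      ext v
      have h1 : 0 < (f v).card := (hf.nonempty v).card_pos
      simp only [hI, Set.mem_setOf_eq, Set.mem_compl_iff]
      omega
    have hsum := Set.ncard_add_ncard_compl I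
    rw [Nat.card_eq_fintype_card] at hsum
    rw [monoVertexCount, hcompl]
    omega
  -- Upper bound: construct a weak IASI with exactly n - α mono-indexed vertices.
  set ι : V → ℕ := fun v => ((Fintype.equivFin V) v : ℕ) with hιdef
  have hι : Function.Injective ι := fun u v h =>
    (Fintype.equivFin V).injective (Fin.val_injective h)
  set f : V → Finset ℕ :=
    fun v => if v ∈ S then ({4 ^ ι v, 2 * 4 ^ ι v} : Finset ℕ) else {4 ^ ι v} with hfdef
  have hpos : ∀ v, 0 < 4 ^ ι v := fun v => pow_pos (by norm_num) _
  have hmem : ∀ v, 4 ^ ι v ∈ f v := by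
    intro v
    by_cases h : v ∈ S <;> simp [hfdef, h]
  have hne : ∀ v, (f v).Nonempty := fun v => ⟨_, hmem v⟩
  have hmin : ∀ v, (f v).min' (hne v) = 4 ^ ι v := by
    intro v
    by_cases h : v ∈ S
    · have hfv : f v = {4 ^ ι v, 2 * 4 ^ ι v} := if_pos h
      rw [show (f v).min' (hne v) = ({4 ^ ι v, 2 * 4 ^ ι v} : Finset ℕ).min'
        (hfv ▸ hne v) from by congr 1]
      exact pair_min' _ (hpos v) _
    · have hfv : f v = {4 ^ ι v} := if_neg h
      rw [show (f v).min' (hne v) = ({4 ^ ι v} : Finset ℕ).min'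
        (hfv ▸ hne v) from by congr 1]
      exact Finset.min'_singleton _
  have hcard : ∀ v, (f v).card = if v ∈ S then 2 else 1 := by
    intro v
    by_cases h : v ∈ S <;> simp only [hfdef, h, if_pos, if_neg, ite_true, ite_false]
    · refine Finset.card_pair ?_
      have := hpos v
      omega
    · exact Finset.card_singleton _
  have hIASI : IsWeakIASI G f := by
    constructor
    · exact hne
    · intro u v h
      have h1 : (f u).min' (hne u) = (f v).min' (hne v) := by simp only [h]
      rw [hmin u, hmin v] at h1
      exact hι (Nat.pow_right_injective (by norm_num) h1)
    · intro e₁ he₁ e₂ he₂ heq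
      induction e₁ using Sym2.ind with | _ u v => ?_
      induction e₂ using Sym2.ind with | _ x y => ?_
      rw [SimpleGraph.mem_edgeSet] at he₁ he₂
      have heq' : f u + f v = f x + f y := heq
      have h1 : (f u + f v).min' ((hne u).add (hne v)) =
          (f x + f y).min' ((hne x).add (hne y)) := by simp only [heq']
      rw [min'_add _ _ (hne u) (hne v), min'_add _ _ (hne x) (hne y),
        hmin u, hmin v, hmin x, hmin y] at h1
      have huv : ι u ≠ ι v := fun hh => (G.ne_of_adj he₁) (hι hh)
      have hxy : ι x ≠ ι y := fun hh => (G.ne_of_adj he₂) (hι hh)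
      rcases pow4_pair huv hxy h1 with ⟨ha, hb⟩ | ⟨ha, hb⟩
      · rw [Sym2.eq_iff]
        exact Or.inl ⟨hι ha, hι hb⟩
      · rw [Sym2.eq_iff]
        exact Or.inr ⟨hι ha, hι hb⟩
    · intro u v hadj
      have hel : edgeLabel f s(u, v) = f u + f v := rfl
      rw [hel]
      have hnotboth : ¬(u ∈ S ∧ v ∈ S) := fun ⟨hu, hv⟩ => hSindep u hu v hv hadj
      by_cases hv : v ∈ S
      · have hu : u ∉ S := fun h => hnotboth ⟨h, hv⟩
        have hfu : f u = {4 ^ ι u} := if_neg hu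
        rw [hfu, Finset.card_singleton_add]
        have := (hne v).card_pos
        simp only [Finset.card_singleton]
        omega
      · have hfv : f v = {4 ^ ι v} := if_neg hv
        rw [hfv, Finset.card_add_singleton]
        have h1 : 1 ≤ (f u).card := (hne u).card_pos
        simp only [Finset.card_singleton]
        omega
  have hcount : monoVertexCount f = n - indepNumber G := by
    have hset : {v | (f v).card = 1} = Sᶜ := by
      ext v
      by_cases h : v ∈ S <;> simp [hcard, h]
    have hsum := Set.ncard_add_ncard_compl S
    rw [Nat.card_eq_fintype_card] at hsum
    rw [monoVertexCount, hset]
    omega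
  apply le_antisymm
  · exact Nat.sInf_le ⟨f, hIASI, hcount⟩
  · refine le_csInf ⟨_, f, hIASI, hcount⟩ ?_
    rintro m ⟨g, hg, rfl⟩
    exact hlow g hg
end

section
/- If G is a finite simple graph admitting a weak IASI, then the maximum number of vertices of G that are not mono-indexed, taken over all weak IASIs of G, equals the independence number α(G) of G. -/
open Pointwise

/-! On an edge `uv`, Cauchy–Davenport gives `|f u + f v| ≥ |f u| + |f v| - 1`, so a weak IASI
makes one end of every edge mono-indexed: the vertices that are not mono-indexed form an
independent set. Conversely, given an independent set `S` and an injection `i : V → ℕ`, label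
`v ∈ S` by `{2 ^ i v, 2 ^ (i v + 1)}` and every other vertex by `{2 ^ i v}`. Each edge has an end
outside `S`, so the labeling is weak, and the minimum `2 ^ i u + 2 ^ i v` of the label of `uv`
recovers `{u, v}` by uniqueness of binary expansions. -/

open Finset

namespace Finset

variable {α : Type*} [LinearOrder α] [Add α] [AddLeftMono α] [AddRightMono α]

theorem min_add (s t : Finset α) : (s + t).min = s.min + t.min := by
  rcases s.eq_empty_or_nonempty with rfl | hs
  · simp
  rcases t.eq_empty_or_nonempty with rfl | ht
  · simp
  rw [← coe_min' hs, ← coe_min' ht, ← coe_min' (hs.add ht), ← WithTop.coe_add,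
    WithTop.coe_inj]
  refine le_antisymm (min'_le _ _ (add_mem_add (min'_mem s hs) (min'_mem t ht))) ?_
  refine le_min' _ _ _ fun _ hx ↦ ?_
  obtain ⟨a, ha, b, hb, rfl⟩ := mem_add.1 hx
  exact add_le_add (min'_le s a ha) (min'_le t b hb)

theorem card_add_eq_max_iff [IsCancelAdd α] {s t : Finset α} (hs : s.Nonempty)
    (ht : t.Nonempty) : #(s + t) = max #s #t ↔ #s = 1 ∨ #t = 1 := by
  constructor
  · intro h
    have := cauchy_davenport_add_of_linearOrder_isCancelAdd hs ht
    have := hs.card_pos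
    have := ht.card_pos
    omega
  · rintro (hs1 | ht1)
    · obtain ⟨a, rfl⟩ := card_eq_one.1 hs1
      rw [card_singleton_add, card_singleton, max_eq_right ht.card_pos]
    · obtain ⟨b, rfl⟩ := card_eq_one.1 ht1
      rw [card_add_singleton, card_singleton, max_eq_left hs.card_pos]

end Finset

theorem Nat.two_pow_add_two_pow_inj {i j k l : ℕ} (hij : i ≠ j) (hkl : k ≠ l)
    (h : 2 ^ i + 2 ^ j = 2 ^ k + 2 ^ l) : s(i, j) = s(k, l) := by
  have hpair : ({i, j} : Finset ℕ) = {k, l} :=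
    geomSum_injective le_rfl (by simpa [sum_pair hij, sum_pair hkl] using h)
  exact Sym2.ext fun x ↦ by simpa using congrArg (x ∈ ·) hpair

theorem edgeLabel_mk {V : Type*} (f : V → Finset ℕ) (u v : V) :
    edgeLabel f s(u, v) = f u + f v := rfl

theorem IsWeakIASI.not_adj_of_card_ne_one {V : Type*} {G : SimpleGraph V} {f : V → Finset ℕ}
    (hf : IsWeakIASI G f) {u v : V} (hu : #(f u) ≠ 1) (hv : #(f v) ≠ 1) : ¬ G.Adj u v := by
  intro huv
  have := hf.weak u v huv
  rw [edgeLabel_mk, card_add_eq_max_iff (hf.nonempty u) (hf.nonempty v)] at this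
  tauto

section IndepSetLabel

variable {V : Type*} (idx : V → ℕ) (S : Set V)

open Classical in
noncomputable def indepSetLabel (v : V) : Finset ℕ :=
  if v ∈ S then {2 ^ idx v, 2 ^ (idx v + 1)} else {2 ^ idx v}

theorem indepSetLabel_nonempty (v : V) : (indepSetLabel idx S v).Nonempty := by
  unfold indepSetLabel
  split_ifs <;> simp

theorem min_indepSetLabel (v : V) : (indepSetLabel idx S v).min = (2 ^ idx v : ℕ) := by
  rw [Nat.cast_withTop]
  unfold indepSetLabel
  split_ifs
  · rw [min_insert, min_singleton, ← WithTop.coe_min,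
      min_eq_left (Nat.pow_lt_pow_succ one_lt_two).le]
  · exact min_singleton

theorem card_indepSetLabel_eq_one_iff (v : V) : #(indepSetLabel idx S v) = 1 ↔ v ∉ S := by
  unfold indepSetLabel
  split_ifs with hv
  · rw [card_pair (Nat.pow_lt_pow_succ one_lt_two).ne]
    simpa using hv
  · simpa using hv

theorem setOf_card_indepSetLabel_ne_one : {v | #(indepSetLabel idx S v) ≠ 1} = S := by
  ext v
  simp [card_indepSetLabel_eq_one_iff]

variable {idx S}

theorem isWeakIASI_indepSetLabel {G : SimpleGraph V} (hidx : Function.Injective idx)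
    (hS : ∀ u ∈ S, ∀ v ∈ S, ¬ G.Adj u v) : IsWeakIASI G (indepSetLabel idx S) where
  nonempty := indepSetLabel_nonempty idx S
  injective a b hab := by
    have := congrArg Finset.min hab
    rw [min_indepSetLabel, min_indepSetLabel, Nat.cast_inj] at this
    exact hidx (Nat.pow_right_injective le_rfl this)
  edgeInjective e₁ he₁ e₂ he₂ hlabel := by
    induction e₁ using Sym2.ind with | _ a b => ?_
    induction e₂ using Sym2.ind with | _ c d => ?_
    have hmin := congrArg Finset.min hlabel
    simp only [edgeLabel_mk, Finset.min_add, min_indepSetLabel] at hmin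
    have hab : idx a ≠ idx b := hidx.ne (G.ne_of_adj he₁)
    have hcd : idx c ≠ idx d := hidx.ne (G.ne_of_adj he₂)
    apply Sym2.map.injective hidx
    exact Nat.two_pow_add_two_pow_inj hab hcd (mod_cast hmin)
  weak u v huv := by
    rw [edgeLabel_mk, card_add_eq_max_iff (indepSetLabel_nonempty idx S u)
      (indepSetLabel_nonempty idx S v), card_indepSetLabel_eq_one_iff,
      card_indepSetLabel_eq_one_iff]
    by_contra! h
    exact hS u h.1 v h.2 huv

end IndepSetLabel

theorem max_nonMonoVertices_eq_indepNumber_general {V : Type*} [Fintype V] (G : SimpleGraph V) :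
    sSup {n | ∃ f, IsWeakIASI G f ∧ ({v | (f v).card ≠ 1} : Set V).ncard = n} =
      indepNumber G := by
  refine congrArg sSup (Set.ext fun n ↦ ⟨?_, ?_⟩)
  · rintro ⟨f, hf, rfl⟩
    exact ⟨_, fun u hu v hv ↦ hf.not_adj_of_card_ne_one hu hv, rfl⟩
  · rintro ⟨S, hS, rfl⟩
    obtain ⟨idx, hidx⟩ := Countable.exists_injective_nat V
    exact ⟨_, isWeakIASI_indepSetLabel hidx hS, by rw [setOf_card_indepSetLabel_ne_one]⟩

/-- For a weak IASI graph `G`, the maximum number of vertices that are not mono-indexed,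
taken over all weak IASIs of `G`, equals the independence number `α(G)`. -/
theorem max_nonMonoVertices_eq_indepNumber {V : Type*} [Fintype V] (G : SimpleGraph V)
    (hG : ∃ f, IsWeakIASI G f) :
    sSup {n | ∃ f, IsWeakIASI G f ∧ ({v | (f v).card ≠ 1} : Set V).ncard = n} =
      indepNumber G :=
  max_nonMonoVertices_eq_indepNumber_general G
end
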